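/- arXiv:2605.19158 — 5 statements merged into one kernel-verified Lean document; each statement's English description precedes it below -/
import Mathlib

section
/- With W, T, and the vectors v_i (for i ∉ T) as in the Plücker-minor construction, for every i ∉ T one has W.mulVec v_i = 0, i.e. each v_i lies in the kernel of the ℤ-linear map ℤ^m → ℤ^n given by W. -/
/-- The Plücker-minor vector `v_i` associated to the columns `S_i = T ∪ {i}` of `W`:
at a column `a = e_i(l) ∈ S_i` (where `e_i` is the increasing enumeration of `S_i`)
its value is `(-1)^(l+1)` times the maximal minor of `W` on the columns `S_i \ {a}`
(taken in increasing order); it vanishes outside `S_i`. -/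
noncomputable def pluckerVec {n m : ℕ} (W : Matrix (Fin n) (Fin m) ℤ)
    (T : Finset (Fin m)) (i : Fin m) (h : (insert i T).card = n + 1) : Fin m → ℤ :=
  fun a =>
    if ha : a ∈ insert i T then
      (-1) ^ ((((insert i T).orderIsoOfFin h).symm ⟨a, ha⟩ : Fin (n + 1)) + 1 : ℕ) *
        (W.submatrix id
          (fun r : Fin n =>
            (((insert i T).orderIsoOfFin h)
              ((((insert i T).orderIsoOfFin h).symm ⟨a, ha⟩).succAbove r) : Fin m))).det
    else 0

/-! Prepending row `k` of an `n × (n + 1)` matrix `A` to `A` gives a square matrix with two equal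
rows; expanding its determinant along the first row shows that the signed maximal minors of `A`
are orthogonal to row `k`. Since `v_i` vanishes off `S_i`, `W v_i` is `W` restricted to the
columns `S_i` applied to `-1` times the signed maximal minors of that restriction. -/

namespace Matrix

theorem mulVec_eq_submatrix_mulVec_of_injective {R ι κ μ : Type*}
    [NonUnitalNonAssocSemiring R] [Fintype ι] [Fintype κ]
    (W : Matrix μ κ R) {f : ι → κ} (hf : f.Injective) {v : κ → R}
    (hv : ∀ a ∉ Set.range f, v a = 0) :
    W *ᵥ v = W.submatrix id f *ᵥ (v ∘ f) := by
  funext k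
  exact (Fintype.sum_of_injective f hf _ _ (fun a ha => by simp [hv a ha]) fun _ => rfl).symm

theorem mulVec_signedMinors_eq_zero {R : Type*} [CommRing R] {n : ℕ}
    (A : Matrix (Fin n) (Fin (n + 1)) R) :
    A *ᵥ (fun l => (-1) ^ (l : ℕ) * (A.submatrix id l.succAbove).det) = 0 := by
  funext k
  have hB : (of (Fin.cons (A k) A) : Matrix (Fin (n + 1)) (Fin (n + 1)) R).det = 0 :=
    det_zero_of_row_eq (Fin.succ_ne_zero k).symm rfl
  rw [det_succ_row_zero] at hB
  refine (Finset.sum_congr rfl fun l _ => ?_).trans hB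
  change A k l * _ = (-1) ^ (l : ℕ) * A k l * (A.submatrix id l.succAbove).det
  ring

end Matrix

section pluckerVec

variable {n m : ℕ} (W : Matrix (Fin n) (Fin m) ℤ) (T : Finset (Fin m)) (i : Fin m)
  (h : (insert i T).card = n + 1)

theorem pluckerVec_eq_zero_of_notMem {a : Fin m} (ha : a ∉ insert i T) :
    pluckerVec W T i h a = 0 :=
  dif_neg ha

theorem pluckerVec_orderIsoOfFin (l : Fin (n + 1)) :
    pluckerVec W T i h ((insert i T).orderIsoOfFin h l) =
      -((-1) ^ (l : ℕ) * (W.submatrix id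
        (fun r => ((insert i T).orderIsoOfFin h (l.succAbove r) : Fin m))).det) := by
  rw [pluckerVec, dif_pos ((insert i T).orderIsoOfFin h l).2, Subtype.coe_eta,
    OrderIso.symm_apply_apply, pow_succ]
  ring

end pluckerVec

/-- Each Plücker-minor vector `v_i` (for `i ∉ T`) lies in the kernel of `W`. -/
theorem pluckerVec_mem_ker {n m : ℕ} (W : Matrix (Fin n) (Fin m) ℤ)
    (T : Finset (Fin m)) (hT : T.card = n)
    (i : Fin m) (hi : i ∉ T) :
    W.mulVec (pluckerVec W T i (by rw [Finset.card_insert_of_notMem hi, hT])) = 0 := by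
  have h : (insert i T).card = n + 1 := by rw [Finset.card_insert_of_notMem hi, hT]
  set e : Fin (n + 1) → Fin m := fun l => (insert i T).orderIsoOfFin h l
  have he : e.Injective := Subtype.val_injective.comp ((insert i T).orderIsoOfFin h).injective
  have hsupp : ∀ a ∉ Set.range e, pluckerVec W T i h a = 0 := fun a ha =>
    pluckerVec_eq_zero_of_notMem W T i h fun haS =>
      ha ⟨_, congrArg Subtype.val (((insert i T).orderIsoOfFin h).apply_symm_apply ⟨a, haS⟩)⟩
  have hv : pluckerVec W T i h ∘ e =
      -fun l : Fin (n + 1) => (-1) ^ (l : ℕ) * ((W.submatrix id e).submatrix id l.succAbove).det :=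
    funext (pluckerVec_orderIsoOfFin W T i h)
  rw [Matrix.mulVec_eq_submatrix_mulVec_of_injective W he hsupp, hv, Matrix.mulVec_neg,
    Matrix.mulVec_signedMinors_eq_zero, neg_zero]
end

section
/- With W, T, and the vectors v_i (for i ∉ T) as in the Plücker-minor construction, the family of m − n vectors (v_i)_{i ∉ T} in ℤ^m is linearly independent over ℤ. -/
lemma pluckerVec_zero {n m : ℕ} (W : Matrix (Fin n) (Fin m) ℤ)
    (T : Finset (Fin m)) (i : Fin m) (h : (insert i T).card = n + 1)
    (a : Fin m) (ha : a ∉ insert i T) : pluckerVec W T i h a = 0 := by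
  simp [pluckerVec, ha]

lemma pluckerVec_self {n m : ℕ} (W : Matrix (Fin n) (Fin m) ℤ)
    (T : Finset (Fin m)) (hT : T.card = n) (i : Fin m) (_hi : i ∉ T)
    (h : (insert i T).card = n + 1) :
    pluckerVec W T i h i =
      (-1) ^ ((((insert i T).orderIsoOfFin h).symm ⟨i, Finset.mem_insert_self i T⟩ : Fin (n + 1)) + 1 : ℕ) *
        (W.submatrix id (fun r : Fin n => ((T.orderIsoOfFin hT) r : Fin m))).det := by
  have hmem : i ∈ insert i T := Finset.mem_insert_self i T
  set σ := (insert i T).orderIsoOfFin h with hσ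
  set l : Fin (n + 1) := σ.symm ⟨i, hmem⟩ with hl
  have key : (fun r : Fin n => (σ (l.succAbove r) : Fin m)) =
      fun r : Fin n => ((T.orderIsoOfFin hT) r : Fin m) := by
    have hmono : StrictMono (fun r : Fin n => (σ (l.succAbove r) : Fin m)) := by
      intro a b hab
      exact (Finset.orderIsoOfFin _ h).strictMono (Fin.strictMono_succAbove l hab)
    have hmemT : ∀ r : Fin n, (σ (l.succAbove r) : Fin m) ∈ T := by
      intro r
      have h1 : (σ (l.succAbove r) : Fin m) ∈ insert i T := (σ (l.succAbove r)).2
      have h2 : (σ (l.succAbove r) : Fin m) ≠ i := by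
        intro hc
        have : σ (l.succAbove r) = (⟨i, hmem⟩ : {x // x ∈ insert i T}) := Subtype.ext hc
        have : l.succAbove r = l := by
          have := congrArg σ.symm this
          simpa [hl] using this
        exact Fin.succAbove_ne l r this
      rcases Finset.mem_insert.1 h1 with h' | h'
      · exact absurd h' h2
      · exact h'
    have := Finset.orderEmbOfFin_unique hT hmemT hmono
    funext r
    exact congrFun this r
  simp only [pluckerVec, dif_pos hmem, ← hσ, ← hl, key]

/-- The family of Plücker-minor vectors `v_i`, `i ∉ T`, is linearly independent over `ℤ`. -/
theorem pluckerVec_linearIndependent {n m : ℕ} (hnm : n ≤ m)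
    (W : Matrix (Fin n) (Fin m) ℤ) (T : Finset (Fin m)) (hT : T.card = n)
    (hdet : (W.submatrix id (fun r : Fin n => ((T.orderIsoOfFin hT) r : Fin m))).det ≠ 0) :
    LinearIndependent ℤ (fun i : {i : Fin m // i ∉ T} =>
      pluckerVec W T i.1 (by rw [Finset.card_insert_of_notMem i.2, hT])) := by
  rw [Fintype.linearIndependent_iff]
  intro c hc j
  have hj := congrFun hc j.1
  simp only [Finset.sum_apply, Pi.smul_apply, smul_eq_mul, Pi.zero_apply] at hj
  rw [Finset.sum_eq_single j] at hj
  · have hself := pluckerVec_self W T hT j.1 j.2 (by rw [Finset.card_insert_of_notMem j.2, hT])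
    rw [hself] at hj
    rcases mul_eq_zero.1 hj with h | h
    · exact h
    · exact absurd h (by
        intro h
        rcases mul_eq_zero.1 h with h' | h'
        · exact absurd h' (by positivity)
        · exact hdet h')
  · intro i _ hij
    have hji : j.1 ∉ insert i.1 T := by
      simp only [Finset.mem_insert]
      rintro (h | h)
      · exact hij (Subtype.ext h.symm)
      · exact j.2 h
    rw [pluckerVec_zero W T i.1 _ j.1 hji, mul_zero]
  · intro h; exact absurd (Finset.mem_univ j) h
end

section
/- With W, T, and the vectors v_i (for i ∉ T) as in the Plücker-minor construction, regard W as a matrix with rational entries. Then the m − n vectors v_i (viewed in ℚ^m) span the kernel of the ℚ-linear map ℚ^m → ℚ^n given by W, and this kernel has dimension m − n over ℚ. -/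
private lemma sum_eq_orderIso' {m k : ℕ} {M : Type*} [AddCommMonoid M] (s : Finset (Fin m))
    (h : s.card = k) (g : Fin m → M) (hg : ∀ a ∉ s, g a = 0) :
    ∑ a, g a = ∑ l : Fin k, g (s.orderIsoOfFin h l) := by
  rw [← Finset.sum_subset (Finset.subset_univ s) (fun a _ ha => hg a ha),
    ← Finset.sum_coe_sort s g, ← Equiv.sum_comp (s.orderIsoOfFin h).toEquiv (fun x => g x)]
  rfl

lemma pluckerVec_mulVec_eq_zero {n m : ℕ} (W : Matrix (Fin n) (Fin m) ℤ) (T : Finset (Fin m))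
    (i : Fin m) (h : (insert i T).card = n + 1) :
    (W.map (Int.cast : ℤ → ℚ)).mulVec (fun a => ((pluckerVec W T i h a : ℤ) : ℚ)) = 0 := by
  funext j
  set S := insert i T with hS
  set e := S.orderIsoOfFin h with he
  let M : Matrix (Fin (n + 1)) (Fin (n + 1)) ℚ :=
    Matrix.of (Fin.cons (fun l => (W j (e l) : ℚ)) (fun k l => (W k (e l) : ℚ)))
  have hM0 : ∀ l, M 0 l = (W j (e l) : ℚ) := fun l => by simp [M]
  have hMs : ∀ (k : Fin n) l, M k.succ l = (W k (e l) : ℚ) := fun k l => by simp [M]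
  have hdetM : M.det = 0 := by
    apply Matrix.det_zero_of_row_eq (i := 0) (j := Fin.succ j) (Fin.succ_ne_zero j).symm
    funext l
    rw [hM0, hMs]
  have hminor : ∀ l : Fin (n + 1), (M.submatrix Fin.succ l.succAbove).det =
      (((W.submatrix id (fun r : Fin n => (e (l.succAbove r) : Fin m))).det : ℤ) : ℚ) := by
    intro l
    rw [show (((W.submatrix id (fun r : Fin n => (e (l.succAbove r) : Fin m))).det : ℤ) : ℚ)
        = ((W.submatrix id (fun r : Fin n => (e (l.succAbove r) : Fin m))).map
          (Int.cast : ℤ → ℚ)).det from (RingHom.map_det (Int.castRingHom ℚ) _)]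
    congr 1
  have key : (W.map (Int.cast : ℤ → ℚ)).mulVec (fun a => ((pluckerVec W T i h a : ℤ) : ℚ)) j
      = - M.det := by
    rw [Matrix.det_succ_row_zero]
    rw [Matrix.mulVec]
    show ∑ a, (W j a : ℚ) * ((pluckerVec W T i h a : ℤ) : ℚ) = _
    rw [sum_eq_orderIso' S h _ (fun a ha => by
      simp only [pluckerVec, ← hS, dif_neg ha, Int.cast_zero, mul_zero])]
    rw [← Finset.sum_neg_distrib]
    apply Finset.sum_congr rfl
    intro l _
    have hmem : (e l : Fin m) ∈ S := (e l).2
    have hsymm : e.symm ⟨(e l : Fin m), hmem⟩ = l := by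
      rw [show (⟨(e l : Fin m), hmem⟩ : {x // x ∈ S}) = e l from rfl, OrderIso.symm_apply_apply]
    simp only [pluckerVec, ← hS, ← he, dif_pos hmem, hsymm, hminor, hM0]
    push_cast
    rw [show ((insert i T).orderIsoOfFin h).symm ⟨(e l : Fin m), hmem⟩ = l from hsymm]
    rw [show ((W.submatrix id fun r => (((insert i T).orderIsoOfFin h) (l.succAbove r) : Fin m)).map
        fun x => (x : ℚ)).det = ((W.submatrix id fun r => (e (l.succAbove r) : Fin m)).map
        fun x => (x : ℚ)).det from rfl]
    ring
  rw [hdetM, neg_zero] at key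
  exact key

lemma pluckerVec_self_ne_zero {n m : ℕ} (W : Matrix (Fin n) (Fin m) ℤ) (T : Finset (Fin m))
    (hT : T.card = n) (i : Fin m) (hi : i ∉ T) (h : (insert i T).card = n + 1)
    (hdet : (W.submatrix id (fun r : Fin n => ((T.orderIsoOfFin hT) r : Fin m))).det ≠ 0) :
    pluckerVec W T i h i ≠ 0 := by
  set S := insert i T with hS
  set e := S.orderIsoOfFin h with he
  have hmem : i ∈ S := Finset.mem_insert_self i T
  set l : Fin (n + 1) := e.symm ⟨i, hmem⟩ with hl
  have hcol : (fun r : Fin n => (e (l.succAbove r) : Fin m))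
      = fun r : Fin n => ((T.orderIsoOfFin hT) r : Fin m) := by
    have hmono : StrictMono (fun r : Fin n => (e (l.succAbove r) : Fin m)) := by
      intro a b hab
      exact (S.orderIsoOfFin h).lt_iff_lt.mpr (Fin.strictMono_succAbove l hab)
    have hmemT : ∀ r : Fin n, (e (l.succAbove r) : Fin m) ∈ T := by
      intro r
      have h1 : (e (l.succAbove r) : Fin m) ∈ S := (e (l.succAbove r)).2
      have h2 : (e (l.succAbove r) : Fin m) ≠ i := by
        intro hcontra
        have : e (l.succAbove r) = ⟨i, hmem⟩ := Subtype.ext hcontra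
        have : l.succAbove r = l := by
          have h4 := congrArg e.symm this
          rwa [OrderIso.symm_apply_apply] at h4
        exact Fin.succAbove_ne l r this
      rcases Finset.mem_insert.mp h1 with h3 | h3
      · exact absurd h3 h2
      · exact h3
    rw [Finset.orderEmbOfFin_unique hT hmemT hmono]
    rfl
  rw [pluckerVec, dif_pos hmem]
  rw [← he, ← hl, hcol]
  exact mul_ne_zero (pow_ne_zero _ (by norm_num)) hdet

theorem pluckerAux_ker_finrank_le {n m : ℕ} (hnm : n ≤ m)
    (W : Matrix (Fin n) (Fin m) ℤ) (T : Finset (Fin m)) (hT : T.card = n)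
    (hdet : (W.submatrix id (fun r : Fin n => ((T.orderIsoOfFin hT) r : Fin m))).det ≠ 0) :
    Module.finrank ℚ (LinearMap.ker (W.map (Int.cast : ℤ → ℚ)).mulVecLin) ≤ m - n := by
  set Wq := W.map (Int.cast : ℤ → ℚ) with hWq
  set K := LinearMap.ker Wq.mulVecLin with hK
  set φ : K →ₗ[ℚ] ({a : Fin m // a ∉ T} → ℚ) :=
    (LinearMap.funLeft ℚ ℚ (fun a : {a : Fin m // a ∉ T} => (a : Fin m))).comp K.subtype with hφ
  have hinj : Function.Injective φ := by
    rw [← LinearMap.ker_eq_bot, eq_bot_iff]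
    intro z hz
    simp only [LinearMap.mem_ker] at hz
    have hz' : ∀ a : Fin m, a ∉ T → (z : Fin m → ℚ) a = 0 := fun a ha => congrFun hz ⟨a, ha⟩
    set B := Wq.submatrix id (fun r : Fin n => ((T.orderIsoOfFin hT) r : Fin m)) with hB
    have hdetB : B.det ≠ 0 := by
      have hcast : B.det
          = (((W.submatrix id (fun r : Fin n => ((T.orderIsoOfFin hT) r : Fin m))).det : ℤ) : ℚ) := by
        rw [show B = ((Int.castRingHom ℚ).mapMatrix
          (W.submatrix id (fun r : Fin n => ((T.orderIsoOfFin hT) r : Fin m)))) from rfl,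
          ← RingHom.map_det]
        rfl
      rw [hcast]
      exact Int.cast_ne_zero.mpr hdet
    set x : Fin n → ℚ := fun r => (z : Fin m → ℚ) ((T.orderIsoOfFin hT) r) with hx
    have hzero : Wq.mulVec (z : Fin m → ℚ) = 0 := by
      have hzK := LinearMap.mem_ker.mp z.2
      rwa [Matrix.mulVecLin_apply] at hzK
    have hBx : B.mulVec x = 0 := by
      funext j
      have h1 : B.mulVec x j = ∑ a, Wq j a * (z : Fin m → ℚ) a :=
        (sum_eq_orderIso' T hT (fun a => Wq j a * (z : Fin m → ℚ) a)
          (fun a ha => by simp [hz' a ha])).symm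
      have h2 : Wq.mulVec (z : Fin m → ℚ) j = ∑ a, Wq j a * (z : Fin m → ℚ) a := rfl
      rw [h1, ← h2, hzero]
    have hx0 : x = 0 := Matrix.eq_zero_of_mulVec_eq_zero hdetB hBx
    have : (z : Fin m → ℚ) = 0 := by
      funext a
      by_cases ha : a ∈ T
      · have : a = ((T.orderIsoOfFin hT) ((T.orderIsoOfFin hT).symm ⟨a, ha⟩) : Fin m) := by
          rw [OrderIso.apply_symm_apply]
        rw [this]
        exact congrFun hx0 _
      · exact hz' a ha
    exact Submodule.mem_bot ℚ |>.mpr (Subtype.ext this)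
  calc Module.finrank ℚ K ≤ Module.finrank ℚ ({a : Fin m // a ∉ T} → ℚ) :=
        LinearMap.finrank_le_finrank_of_injective hinj
    _ = m - n := by
        rw [Module.finrank_fintype_fun_eq_card, Fintype.card_subtype_compl]
        simp [hT]


set_option maxHeartbeats 1000000 in
/-- Over `ℚ`, the Plücker-minor vectors `v_i`, `i ∉ T`, span the kernel of `W`, and
this kernel has dimension `m - n`. -/
theorem pluckerVec_span_ker_rat {n m : ℕ} (hnm : n ≤ m)
    (W : Matrix (Fin n) (Fin m) ℤ) (T : Finset (Fin m)) (hT : T.card = n)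
    (hdet : (W.submatrix id (fun r : Fin n => ((T.orderIsoOfFin hT) r : Fin m))).det ≠ 0) :
    Submodule.span ℚ (Set.range (fun i : {i : Fin m // i ∉ T} => fun a : Fin m =>
        ((pluckerVec W T i.1 (by rw [Finset.card_insert_of_notMem i.2, hT]) a : ℤ) : ℚ)))
      = LinearMap.ker (W.map (Int.cast : ℤ → ℚ)).mulVecLin ∧
    Module.finrank ℚ (LinearMap.ker (W.map (Int.cast : ℤ → ℚ)).mulVecLin) = m - n := by
  classical
  set v : {i : Fin m // i ∉ T} → (Fin m → ℚ) := fun i => fun a : Fin m =>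
      ((pluckerVec W T i.1 (by rw [Finset.card_insert_of_notMem i.2, hT]) a : ℤ) : ℚ) with hv
  set K := LinearMap.ker (W.map (Int.cast : ℤ → ℚ)).mulVecLin with hK
  -- each v i is in the kernel
  have hmemK : ∀ i, v i ∈ K := by
    intro i
    rw [hK, LinearMap.mem_ker, Matrix.mulVecLin_apply]
    exact pluckerVec_mulVec_eq_zero W T i.1 _
  have hle : Submodule.span ℚ (Set.range v) ≤ K :=
    Submodule.span_le.mpr (Set.range_subset_iff.mpr hmemK)
  -- linear independence
  have hindep : LinearIndependent ℚ v := by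
    rw [Fintype.linearIndependent_iff]
    intro c hc i
    have hci := congrFun hc i.1
    simp only [Finset.sum_apply, Pi.smul_apply, smul_eq_mul, Pi.zero_apply] at hci
    rw [Finset.sum_eq_single i (fun j _ hji => by
        have hne : i.1 ∉ insert j.1 T := by
          rw [Finset.mem_insert]
          rintro (h1 | h1)
          · exact hji (Subtype.ext h1.symm)
          · exact i.2 h1
        simp only [hv, pluckerVec, dif_neg hne, Int.cast_zero, mul_zero])
      (fun hni => absurd (Finset.mem_univ i) hni)] at hci
    have hvne : v i i.1 ≠ 0 := by
      simp only [hv]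
      exact_mod_cast Int.cast_ne_zero.mpr
        (pluckerVec_self_ne_zero W T hT i.1 i.2 _ hdet)
    exact (mul_eq_zero.mp hci).resolve_right hvne
  -- cardinality of the index type
  have hcard : Fintype.card {i : Fin m // i ∉ T} = m - n := by
    rw [Fintype.card_subtype_compl]
    simp [hT]
  -- finrank of the span
  have hspan : Module.finrank ℚ (Submodule.span ℚ (Set.range v)) = m - n := by
    rw [finrank_span_eq_card hindep, hcard]
  -- finrank of the kernel
  have hker_le : Module.finrank ℚ K ≤ m - n := pluckerAux_ker_finrank_le hnm W T hT hdet
  have hker_ge : m - n ≤ Module.finrank ℚ K := hspan ▸ Submodule.finrank_mono hle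
  have hker : Module.finrank ℚ K = m - n := le_antisymm hker_le hker_ge
  refine ⟨?_, hker⟩
  exact Submodule.eq_of_le_of_finrank_le hle (by rw [hspan, hker])
end

section
/- Let p be a prime and let v : ι → (Fin n → ZMod p) be a family of vectors that is linearly independent over ZMod p. Then the family of integer vectors obtained by applying the canonical lift ZMod p → {0,1,…,p−1} ⊆ ℤ entrywise, i.e. the family (fun a => fun i => ((v a i).val : ℤ)) : ι → (Fin n → ℤ), is linearly independent over ℤ. -/
/-!
Dividing an integer relation among the lifts by the gcd of its coefficients gives a primitive
relation; reducing it mod `p` yields a relation among the original vectors that is nontrivial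
because its coefficients are not all divisible by `p`.
-/

theorem linearIndependent_int_of_linearIndependent_zmod {ι κ : Type*} {p : ℕ} (hp : p ≠ 1)
    (w : ι → κ → ℤ) (hw : LinearIndependent (ZMod p) fun a i => (w a i : ZMod p)) :
    LinearIndependent ℤ w := by
  rw [linearIndependent_iff'] at hw ⊢
  intro s g hrel i hi
  by_contra hgi
  obtain ⟨g', hg, hg'_gcd⟩ := s.extract_gcd g ⟨i, hi⟩
  have hgcd : s.gcd g ≠ 0 := mt (Finset.gcd_eq_zero_iff.1 · i hi) hgi
  have hrel' : ∑ j ∈ s, g' j • w j = 0 := by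
    rw [← smul_right_inj hgcd, Finset.smul_sum, smul_zero, ← hrel]
    exact Finset.sum_congr rfl fun j hj => by rw [smul_smul, ← hg j hj]
  have hrel_mod : ∑ j ∈ s, (g' j : ZMod p) • (fun k => (w j k : ZMod p)) = 0 := by
    funext k
    simpa using congrArg (fun x : ℤ => (x : ZMod p)) (congrFun hrel' k)
  have hdvd : ∀ j ∈ s, (p : ℤ) ∣ g' j := fun j hj =>
    (ZMod.intCast_zmod_eq_zero_iff_dvd _ _).1 (hw s _ hrel_mod j hj)
  have hdvd_one : (p : ℤ) ∣ 1 := hg'_gcd ▸ Finset.dvd_gcd hdvd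
  exact hp (by exact_mod_cast Int.eq_one_of_dvd_one (by positivity) hdvd_one)

/-- A family of vectors over `ZMod p` that is linearly independent stays linearly
independent over `ℤ` after applying the entrywise canonical lift
`ZMod p → {0, 1, …, p-1} ⊆ ℤ` (the "Gauché" embedding). -/
theorem gauche_lift_linearIndependent (p : ℕ) (hp : p.Prime) (n : ℕ) {ι : Type*}
    (v : ι → (Fin n → ZMod p)) (hv : LinearIndependent (ZMod p) v) :
    LinearIndependent ℤ (fun a : ι => fun i : Fin n => ((v a i).val : ℤ)) := by
  have : NeZero p := ⟨hp.ne_zero⟩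
  refine linearIndependent_int_of_linearIndependent_zmod hp.ne_one _ ?_
  simpa only [Int.cast_natCast, ZMod.natCast_zmod_val] using hv
end

section
/- Let p ≥ 1 be an integer and let L be a ℤ-submodule of ℤ^n (functions Fin n → ℤ) containing p • e_i for every i, where e_i is the i-th standard basis vector. Then L admits a ℤ-basis indexed by Fin n all of whose vectors have nonnegative coordinates; that is, there exists a basis b : Basis (Fin n) ℤ L such that for all a and j, 0 ≤ (b a : Fin n → ℤ) j. -/
/-!
Induction on `n`. The first coordinates of the vectors of `L` form an ideal `dℤ` with `d > 0`,
since it contains `p`. Pick `w ∈ L` with `w 0 = d`; adding multiples of the vectors `p • e_i`,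
`i ≠ 0`, makes its other coordinates nonnegative. The vectors of `L` with first coordinate `0`
form a lattice of the same kind in `ℤ^(n-1)`, and `w` together with a nonnegative basis of it is
a basis of `L`.
-/

def Fin.consZeroₗ (R : Type*) [Semiring R] (n : ℕ) : (Fin n → R) →ₗ[R] (Fin (n + 1) → R) :=
  (Fin.consLinearEquiv R fun _ => R).toLinearMap ∘ₗ LinearMap.inr R R (Fin n → R)

section
variable {R : Type*} [Semiring R] {n : ℕ}

@[simp]
theorem Fin.consZeroₗ_apply (x : Fin n → R) : Fin.consZeroₗ R n x = Fin.cons 0 x := rfl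

theorem Fin.consZeroₗ_injective : Function.Injective (Fin.consZeroₗ R n) :=
  fun x y h => by simpa using congrArg Fin.tail h

theorem Fin.mem_range_consZeroₗ_iff {v : Fin (n + 1) → R} :
    v ∈ LinearMap.range (Fin.consZeroₗ R n) ↔ v 0 = 0 :=
  ⟨by rintro ⟨x, rfl⟩; rfl, fun h => ⟨Fin.tail v, by simp [← h]⟩⟩

@[simp]
theorem Fin.consZeroₗ_single (i : Fin n) (x : R) :
    Fin.consZeroₗ R n (Pi.single i x) = Pi.single i.succ x := by
  ext j
  induction j using Fin.cases <;> simp [Pi.single_apply]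

end

theorem Submodule.exists_mem_pos_dvd {M : Type*} [AddCommGroup M] (f : M →ₗ[ℤ] ℤ)
    {L : Submodule ℤ M} (hL : ∃ v ∈ L, f v ≠ 0) :
    ∃ w ∈ L, 0 < f w ∧ ∀ v ∈ L, f w ∣ f v := by
  set S := L.map f
  set g := Submodule.IsPrincipal.generator S
  have hg : g ≠ 0 := by
    obtain ⟨v, hv, hfv⟩ := hL
    rw [Ne, ← Submodule.IsPrincipal.eq_bot_iff_generator_eq_zero, Submodule.eq_bot_iff]
    exact fun h => hfv (h _ ⟨v, hv, rfl⟩)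
  obtain ⟨w, hw, hfw⟩ := Submodule.IsPrincipal.generator_mem S
  refine ⟨g.sign • w, L.smul_mem _ hw, ?_, fun v hv => ?_⟩
  · rw [map_zsmul, hfw, smul_eq_mul, Int.sign_mul_self_eq_abs]
    exact abs_pos.mpr hg
  · rw [map_zsmul, hfw, smul_eq_mul, Int.sign_mul_self_eq_abs, abs_dvd]
    exact (Submodule.IsPrincipal.mem_iff_generator_dvd S).mp ⟨v, hv, rfl⟩

theorem Submodule.exists_mem_nonneg_of_smul_single_mem {ι : Type*} [Fintype ι] [DecidableEq ι]
    {L : Submodule ℤ (ι → ℤ)} {p : ℤ} (hp : 0 < p) {s : Finset ι}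
    (hs : ∀ i ∈ s, p • Pi.single i 1 ∈ L) {w : ι → ℤ} (hw : w ∈ L) :
    ∃ w' ∈ L, (∀ i ∉ s, w' i = w i) ∧ ∀ i ∈ s, 0 ≤ w' i := by
  set v : ι → ℤ := w + ∑ j ∈ s, |w j| • p • Pi.single j 1
  have hv : ∀ i, v i = w i + if i ∈ s then |w i| * p else 0 := fun i => by
    simp [v, Finset.sum_apply, Pi.single_apply, mul_comm]
  refine ⟨v, L.add_mem hw (L.sum_mem fun j hj => L.smul_mem _ (hs j hj)),
    fun i hi => by simp [hv, hi], fun i hi => ?_⟩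
  rw [hv, if_pos hi]
  nlinarith [neg_abs_le (w i), abs_nonneg (w i)]

theorem Submodule.exists_nonneg_basis_succ {n : ℕ} {p : ℤ} (hp : 0 < p)
    {L : Submodule ℤ (Fin (n + 1) → ℤ)} (hL : ∀ i, p • Pi.single i 1 ∈ L)
    (c : Module.Basis (Fin n) ℤ (L.comap (Fin.consZeroₗ ℤ n)))
    (hc : ∀ a j, 0 ≤ (c a : Fin n → ℤ) j) :
    ∃ b : Module.Basis (Fin (n + 1)) ℤ L, ∀ a j, 0 ≤ (b a : Fin (n + 1) → ℤ) j := by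
  obtain ⟨w, hwL, hw_pos, hw_dvd⟩ :=
    Submodule.exists_mem_pos_dvd (LinearMap.proj 0) ⟨p • Pi.single 0 1, hL 0, by simp [hp.ne']⟩
  obtain ⟨y, hyL, hy0, hy_nonneg⟩ :=
    Submodule.exists_mem_nonneg_of_smul_single_mem hp (s := {0}ᶜ) (fun i _ => hL i) hwL
  replace hy0 : y 0 = w 0 := hy0 0 (by simp)
  have hli : ∀ k : ℤ, ∀ x ∈ (L.comap (Fin.consZeroₗ ℤ n)).map (Fin.consZeroₗ ℤ n),
      k • y + x = 0 → k = 0 := by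
    intro k x hx hkx
    have := congrFun hkx 0
    simp only [Pi.add_apply, Pi.smul_apply, smul_eq_mul, hy0, Pi.zero_apply,
      Fin.mem_range_consZeroₗ_iff.mp (LinearMap.map_le_range hx), add_zero] at this
    exact (mul_eq_zero.mp this).resolve_right hw_pos.ne'
  have hsp : ∀ z ∈ L, ∃ k : ℤ,
      z + k • y ∈ (L.comap (Fin.consZeroₗ ℤ n)).map (Fin.consZeroₗ ℤ n) := by
    intro z hz
    obtain ⟨k, hk⟩ := hw_dvd z hz
    refine ⟨-k, ?_⟩
    rw [Submodule.map_comap_eq]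
    refine ⟨Fin.mem_range_consZeroₗ_iff.mpr ?_, L.add_mem hz (L.smul_mem _ hyL)⟩
    simp only [LinearMap.coe_proj, Function.eval] at hk
    simp only [Pi.add_apply, Pi.smul_apply, smul_eq_mul, hy0, hk]
    ring
  refine ⟨Module.Basis.mkFinConsOfLE y hyL (c.map (Submodule.equivMapOfInjective _
    Fin.consZeroₗ_injective _)) (Submodule.map_comap_le _ _) hli hsp, fun a j => ?_⟩
  rw [Module.Basis.coe_mkFinConsOfLE]
  induction a using Fin.cases with
  | zero =>
    by_cases hj : j = 0
    · simpa [hj, hy0] using hw_pos.le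
    · simpa using hy_nonneg j (by simpa using hj)
  | succ a =>
    induction j using Fin.cases with
    | zero => simp
    | succ j => simpa using hc a j

/-- Every `ℤ`-sublattice of `ℤ^n` containing all the pure-power vectors `p • e_i`
(`p ≥ 1`) admits a `ℤ`-basis indexed by `Fin n` all of whose vectors have nonnegative
coordinates. -/
theorem exists_nonneg_basis (p : ℕ) (hp : 1 ≤ p) (n : ℕ)
    (L : Submodule ℤ (Fin n → ℤ))
    (hL : ∀ i : Fin n, (p : ℤ) • Pi.single i (1 : ℤ) ∈ L) :
    ∃ b : Module.Basis (Fin n) ℤ L, ∀ (a : Fin n) (j : Fin n), 0 ≤ (b a : Fin n → ℤ) j := by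
  induction n with
  | zero => exact ⟨Module.Basis.empty _, fun a => a.elim0⟩
  | succ n ih =>
    have hL' : ∀ i, (p : ℤ) • Pi.single i 1 ∈ L.comap (Fin.consZeroₗ ℤ n) := fun i => by
      simpa only [Submodule.mem_comap, map_smul, Fin.consZeroₗ_single] using hL i.succ
    obtain ⟨c, hc⟩ := ih _ hL'
    exact Submodule.exists_nonneg_basis_succ (by omega) hL c hc
end
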